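/- (Heine's first 2φ1 transformation) Let q, a, b, c, z be complex numbers with |q| < 1, |z| < 1, |b| < 1, b ≠ 0, c ≠ q^{-j} for every nonnegative integer j, and az ≠ q^{-j} for every nonnegative integer j. Then ∑_{k=0}^∞ [(a;q)_k (b;q)_k / ((q;q)_k (c;q)_k)] z^k = [(b;q)_∞ (az;q)_∞ / ((c;q)_∞ (z;q)_∞)] · ∑_{k=0}^∞ [(c/b;q)_k (z;q)_k / ((q;q)_k (az;q)_k)] b^k. -/

import Mathlib

/-- The finite q-shifted factorial `(a;q)_k = ∏_{j=0}^{k-1} (1 - a q^j)`. -/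
noncomputable def qPoch (a q : ℂ) (k : ℕ) : ℂ := ∏ j ∈ Finset.range k, (1 - a * q ^ j)

/-- The infinite q-shifted factorial `(a;q)_∞ = ∏_{j=0}^{∞} (1 - a q^j)`. -/
noncomputable def qPochInf (a q : ℂ) : ℂ := ∏' j : ℕ, (1 - a * q ^ j)

set_option maxHeartbeats 1000000

open Filter Finset Topology

lemma qPoch_succ (a q : ℂ) (k : ℕ) : qPoch a q (k + 1) = qPoch a q k * (1 - a * q ^ k) := by
  simp [qPoch, Finset.prod_range_succ]

lemma hfac_of_small {q w : ℂ} (hq : ‖q‖ < 1) (hw : ‖w‖ < 1) (j : ℕ) : 1 - w * q ^ j ≠ 0 := by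
  intro h
  have h1 : w * q ^ j = 1 := by linear_combination -h
  have : ‖w * q ^ j‖ < 1 := by
    calc ‖w * q ^ j‖ = ‖w‖ * ‖q‖ ^ j := by simp [norm_mul, norm_pow]
    _ ≤ ‖w‖ * 1 := by
        have : ‖q‖ ^ j ≤ 1 := pow_le_one₀ (norm_nonneg q) hq.le
        have := norm_nonneg w
        nlinarith
    _ < 1 := by simpa using hw
  rw [h1] at this; simp at this

lemma hfac_of_zpow {q w : ℂ} (hw : ∀ j : ℕ, w ≠ q ^ (-(j : ℤ))) (j : ℕ) :
    1 - w * q ^ j ≠ 0 := by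
  intro h
  have h1 : w * q ^ j = 1 := by linear_combination -h
  rcases eq_or_ne q 0 with rfl | hq0
  · rcases Nat.eq_zero_or_pos j with rfl | hj
    · exact hw 0 (by simpa using h1)
    · rw [zero_pow hj.ne', mul_zero] at h1; exact one_ne_zero h1.symm
  · have hqj : (q : ℂ) ^ j ≠ 0 := pow_ne_zero _ hq0
    have : w = (q ^ j)⁻¹ := by field_simp at h1 ⊢; linear_combination h1
    exact hw j (by rw [this, ← zpow_natCast q j, ← zpow_neg])

lemma qPoch_ne_zero {q w : ℂ} (hw : ∀ j : ℕ, 1 - w * q ^ j ≠ 0) (k : ℕ) :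
    qPoch w q k ≠ 0 :=
  Finset.prod_ne_zero_iff.2 fun j _ => hw j

lemma qPoch_q_ne_zero {q : ℂ} (hq : ‖q‖ < 1) (k : ℕ) : qPoch q q k ≠ 0 :=
  qPoch_ne_zero (hfac_of_small hq hq) k

lemma summable_log {q : ℂ} (hq : ‖q‖ < 1) (w : ℂ) :
    Summable fun j : ℕ => Complex.log (1 - w * q ^ j) := by
  have hgs : Summable (fun j : ℕ => 3 / 2 * (‖w‖ * ‖q‖ ^ j)) :=
    ((summable_geometric_of_lt_one (norm_nonneg q) hq).mul_left ‖w‖).mul_left (3/2)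
  refine Summable.of_norm_bounded_eventually_nat hgs ?_
  · have h0 : Tendsto (fun j : ℕ => w * q ^ j) atTop (𝓝 0) := by
      simpa using (tendsto_pow_atTop_nhds_zero_of_norm_lt_one hq).const_mul w
    have h1 : ∀ᶠ j : ℕ in atTop, ‖w * q ^ j‖ ≤ 1 / 2 := by
      have := h0.eventually (Metric.closedBall_mem_nhds (0 : ℂ) (by norm_num : (0:ℝ) < 1/2))
      simpa [mem_closedBall_zero_iff] using this
    filter_upwards [h1] with j hj
    have : ‖Complex.log (1 + -(w * q ^ j))‖ ≤ 3 / 2 * ‖-(w * q ^ j)‖ :=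
      Complex.norm_log_one_add_half_le_self (by simpa using hj)
    simpa [norm_mul, norm_pow, sub_eq_add_neg] using this

lemma qPochInf_eq_exp {q : ℂ} (hq : ‖q‖ < 1) {w : ℂ} (hw : ∀ j : ℕ, 1 - w * q ^ j ≠ 0) :
    qPochInf w q = Complex.exp (∑' j : ℕ, Complex.log (1 - w * q ^ j)) := by
  have := Complex.cexp_tsum_eq_tprod (f := fun j : ℕ => 1 - w * q ^ j) hw (summable_log hq w)
  simpa [qPochInf] using this.symm

lemma qPochInf_ne_zero {q : ℂ} (hq : ‖q‖ < 1) {w : ℂ} (hw : ∀ j : ℕ, 1 - w * q ^ j ≠ 0) :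
    qPochInf w q ≠ 0 := by
  rw [qPochInf_eq_exp hq hw]; exact Complex.exp_ne_zero _

lemma hw_tail {q w : ℂ} (hw : ∀ j : ℕ, 1 - w * q ^ j ≠ 0) (n : ℕ) (j : ℕ) :
    1 - w * q ^ n * q ^ j ≠ 0 := by
  have := hw (n + j); rwa [pow_add, ← mul_assoc] at this

lemma qPochInf_split {q : ℂ} (hq : ‖q‖ < 1) {w : ℂ} (hw : ∀ j : ℕ, 1 - w * q ^ j ≠ 0)
    (n : ℕ) : qPochInf w q = qPoch w q n * qPochInf (w * q ^ n) q := by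
  rw [qPochInf_eq_exp hq hw, qPochInf_eq_exp hq (hw_tail hw n)]
  have hsum := summable_log hq w
  have h2 : (∑' j : ℕ, Complex.log (1 - w * q ^ n * q ^ j))
      = ∑' j : ℕ, Complex.log (1 - w * q ^ (j + n)) := by
    apply tsum_congr; intro j; congr 2; rw [pow_add]; ring
  rw [h2, ← hsum.sum_add_tsum_nat_add n, Complex.exp_add]
  congr 1
  rw [Complex.exp_sum, qPoch]
  exact Finset.prod_congr rfl fun j _ => Complex.exp_log (hw j)

lemma tendsto_qPoch {q : ℂ} (hq : ‖q‖ < 1) {w : ℂ} (hw : ∀ j : ℕ, 1 - w * q ^ j ≠ 0) :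
    Tendsto (fun n => qPoch w q n) atTop (𝓝 (qPochInf w q)) := by
  have hsum := summable_log hq w
  have htail : Tendsto (fun n : ℕ => ∑' j : ℕ, Complex.log (1 - w * q ^ (j + n))) atTop
      (𝓝 0) := by
    simpa using tendsto_sum_nat_add (fun j => Complex.log (1 - w * q ^ j))
  have hexp : Tendsto (fun n : ℕ => Complex.exp (∑' j : ℕ, Complex.log (1 - w * q ^ (j + n))))
      atTop (𝓝 1) := by
    simpa [Function.comp_def] using (Complex.continuous_exp.continuousAt (x := 0)).tendsto.comp htail
  have key : ∀ n : ℕ, qPoch w q n =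
      qPochInf w q / Complex.exp (∑' j : ℕ, Complex.log (1 - w * q ^ (j + n))) := by
    intro n
    have h1 := qPochInf_split hq hw n
    have h2 : qPochInf (w * q ^ n) q
        = Complex.exp (∑' j : ℕ, Complex.log (1 - w * q ^ (j + n))) := by
      rw [qPochInf_eq_exp hq (hw_tail hw n)]
      congr 1
      apply tsum_congr; intro j; congr 2; rw [pow_add, ← mul_assoc]; ring
    rw [h2] at h1
    field_simp [Complex.exp_ne_zero] at h1 ⊢
    linear_combination -h1
  simp_rw [key]
  have := (tendsto_const_nhds (x := qPochInf w q) (f := atTop (α := ℕ))).div hexp one_ne_zero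
  simpa [Pi.div_def] using this

noncomputable def qTerm (a q z : ℂ) (k : ℕ) : ℂ := qPoch a q k / qPoch q q k * z ^ k

lemma summable_norm_term {q : ℂ} (hq : ‖q‖ < 1) (a : ℂ) {z : ℂ} (hz : ‖z‖ < 1) :
    Summable fun k : ℕ => ‖qTerm a q z k‖ := by
  set f : ℕ → ℂ := qTerm a q z with hf
  set ε : ℝ := (1 - ‖z‖) / 6 with hεdef
  have hε : 0 < ε := by have := norm_nonneg z; simp only [hεdef]; linarith
  have hε1 : ε < 1 := by have := norm_nonneg z; simp only [hεdef]; linarith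
  set r : ℝ := (1 + ‖z‖) / 2 with hrdef
  have hr : r < 1 := by simp only [hrdef]; linarith
  apply summable_of_ratio_norm_eventually_le hr
  have h0a : Tendsto (fun k : ℕ => a * q ^ k) atTop (𝓝 0) := by
    simpa using (tendsto_pow_atTop_nhds_zero_of_norm_lt_one hq).const_mul a
  have h0q : Tendsto (fun k : ℕ => q * q ^ k) atTop (𝓝 0) := by
    simpa using (tendsto_pow_atTop_nhds_zero_of_norm_lt_one hq).const_mul q
  have h1 : ∀ᶠ k : ℕ in atTop, ‖a * q ^ k‖ ≤ ε := by
    have := h0a.eventually (Metric.closedBall_mem_nhds (0 : ℂ) hε)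
    simpa [mem_closedBall_zero_iff] using this
  have h2 : ∀ᶠ k : ℕ in atTop, ‖q * q ^ k‖ ≤ ε := by
    have := h0q.eventually (Metric.closedBall_mem_nhds (0 : ℂ) hε)
    simpa [mem_closedBall_zero_iff] using this
  filter_upwards [h1, h2] with k hk1 hk2
  have hqq := qPoch_q_ne_zero hq k
  have hqk : (1 - q * q ^ k) ≠ 0 := hfac_of_small hq hq k
  have hident : f (k + 1) * (1 - q * q ^ k) = f k * ((1 - a * q ^ k) * z) := by
    have hqk' : 1 - q ^ k * q ≠ 0 := by rwa [mul_comm] at hqk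
    simp only [hf, qTerm, qPoch_succ]
    field_simp
    ring
  have heq : ‖f (k + 1)‖ * ‖1 - q * q ^ k‖ = ‖f k‖ * (‖1 - a * q ^ k‖ * ‖z‖) := by
    rw [← norm_mul, ← norm_mul, ← norm_mul, hident]
  have h3 : ‖1 - a * q ^ k‖ ≤ 1 + ε := by
    calc ‖1 - a * q ^ k‖ ≤ ‖(1 : ℂ)‖ + ‖a * q ^ k‖ := norm_sub_le _ _
    _ ≤ 1 + ε := by rw [norm_one]; linarith
  have h4 : 1 - ε ≤ ‖1 - q * q ^ k‖ := by
    have := norm_sub_norm_le (1 : ℂ) (q * q ^ k)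
    rw [norm_one] at this
    linarith
  have key : ‖f (k + 1)‖ * (1 - ε) ≤ ‖f k‖ * ((1 + ε) * ‖z‖) := by
    calc ‖f (k + 1)‖ * (1 - ε) ≤ ‖f (k + 1)‖ * ‖1 - q * q ^ k‖ := by
          have := norm_nonneg (f (k + 1)); nlinarith
    _ = ‖f k‖ * (‖1 - a * q ^ k‖ * ‖z‖) := heq
    _ ≤ ‖f k‖ * ((1 + ε) * ‖z‖) := by
          have := norm_nonneg (f k); have := norm_nonneg z
          have h5 : ‖1 - a * q ^ k‖ * ‖z‖ ≤ (1 + ε) * ‖z‖ := by nlinarith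
          nlinarith
  have h5 : (1 + ε) * ‖z‖ ≤ r * (1 - ε) := by
    have := norm_nonneg z
    simp only [hεdef, hrdef]
    nlinarith
  have h6 : ‖f (k + 1)‖ * (1 - ε) ≤ (r * ‖f k‖) * (1 - ε) := by
    have := norm_nonneg (f k)
    calc ‖f (k + 1)‖ * (1 - ε) ≤ ‖f k‖ * ((1 + ε) * ‖z‖) := key
    _ ≤ ‖f k‖ * (r * (1 - ε)) := by nlinarith
    _ = (r * ‖f k‖) * (1 - ε) := by ring
  have h7 := le_of_mul_le_mul_right h6 (by linarith : (0:ℝ) < 1 - ε)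
  simp only [Real.norm_eq_abs, abs_norm]
  exact h7

lemma summable_term {q : ℂ} (hq : ‖q‖ < 1) (a : ℂ) {z : ℂ} (hz : ‖z‖ < 1) :
    Summable (qTerm a q z) :=
  (summable_norm_term hq a hz).of_norm

lemma funceq {q : ℂ} (hq : ‖q‖ < 1) (a : ℂ) {z : ℂ} (hz : ‖z‖ < 1) :
    (1 - z) * ∑' k : ℕ, qTerm a q z k
      = (1 - a * z) * ∑' k : ℕ, qTerm a q (q * z) k := by
  have hz' : ‖q * z‖ < 1 := by
    rw [norm_mul]
    have := norm_nonneg z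
    nlinarith [norm_nonneg q]
  have hs1 : Summable (qTerm a q z) := summable_term hq a hz
  have hs2 : Summable (qTerm a q (q * z)) := summable_term hq a hz'
  set u : ℕ → ℂ := fun k => qTerm a q z k - qTerm a q (q * z) k with hu
  have hsu : Summable u := hs1.sub hs2
  have hstep : ∀ k : ℕ, u (k + 1) = z * qTerm a q z k - (a * z) * qTerm a q (q * z) k := by
    intro k
    have hqq := qPoch_q_ne_zero hq k
    have hqk : (1 - q * q ^ k) ≠ 0 := hfac_of_small hq hq k
    have hqk' : 1 - q ^ k * q ≠ 0 := by rwa [mul_comm] at hqk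
    simp only [hu, qTerm, qPoch_succ]
    field_simp
    ring
  have h1 : ∑' k, u k = (∑' k, qTerm a q z k) - ∑' k, qTerm a q (q * z) k := hs1.tsum_sub hs2
  have h2 : ∑' k, u (k + 1)
      = z * (∑' k, qTerm a q z k) - (a * z) * ∑' k, qTerm a q (q * z) k := by
    rw [tsum_congr hstep, (hs1.mul_left z).tsum_sub (hs2.mul_left (a * z)),
      tsum_mul_left, tsum_mul_left]
  have h3 : ∑' k, u k = u 0 + ∑' k, u (k + 1) := hsu.tsum_eq_zero_add
  have h0 : u 0 = 0 := by simp [hu, qTerm, qPoch]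
  rw [h0, zero_add] at h3
  linear_combination -h1 + h2 + h3

theorem qbinom_aux {q : ℂ} (hq : ‖q‖ < 1) {a z : ℂ} (hz : ‖z‖ < 1)
    (haz : ∀ j : ℕ, 1 - a * z * q ^ j ≠ 0) :
    qPochInf z q * ∑' k : ℕ, qTerm a q z k = qPochInf (a * z) q := by
  have hzn : ∀ n : ℕ, ‖q ^ n * z‖ < 1 := by
    intro n
    rw [norm_mul, norm_pow]
    have h1 : ‖q‖ ^ n ≤ 1 := pow_le_one₀ (norm_nonneg q) hq.le
    have := norm_nonneg z
    nlinarith [pow_nonneg (norm_nonneg q) n]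
  have hind : ∀ n : ℕ, qPoch z q n * ∑' k : ℕ, qTerm a q z k
      = qPoch (a * z) q n * ∑' k : ℕ, qTerm a q (q ^ n * z) k := by
    intro n
    induction n with
    | zero => simp [qPoch]
    | succ n ih =>
      have hfe := funceq hq a (hzn n)
      have hpow : ∀ k : ℕ, qTerm a q (q * (q ^ n * z)) k = qTerm a q (q ^ (n + 1) * z) k := by
        intro k; unfold qTerm; rw [show q * (q ^ n * z) = q ^ (n + 1) * z by ring]
      calc qPoch z q (n + 1) * ∑' k : ℕ, qTerm a q z k
          = (qPoch z q n * ∑' k : ℕ, qTerm a q z k) * (1 - z * q ^ n) := by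
            rw [qPoch_succ]; ring
      _ = (qPoch (a * z) q n * ∑' k : ℕ, qTerm a q (q ^ n * z) k) * (1 - z * q ^ n) := by
            rw [ih]
      _ = qPoch (a * z) q n * ((1 - q ^ n * z) * ∑' k : ℕ, qTerm a q (q ^ n * z) k) := by
            ring
      _ = qPoch (a * z) q n
            * ((1 - a * (q ^ n * z)) * ∑' k : ℕ, qTerm a q (q * (q ^ n * z)) k) := by
            rw [hfe]
      _ = qPoch (a * z) q (n + 1) * ∑' k : ℕ, qTerm a q (q ^ (n + 1) * z) k := by
            rw [tsum_congr hpow, qPoch_succ]; ring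
  have hzfac : ∀ j : ℕ, 1 - z * q ^ j ≠ 0 := hfac_of_small hq hz
  have L1 : Tendsto (fun n => qPoch z q n * ∑' k : ℕ, qTerm a q z k) atTop
      (𝓝 (qPochInf z q * ∑' k : ℕ, qTerm a q z k)) :=
    (tendsto_qPoch hq hzfac).mul_const _
  have L2a : Tendsto (fun n => qPoch (a * z) q n) atTop (𝓝 (qPochInf (a * z) q)) :=
    tendsto_qPoch hq haz
  have hM : Summable fun k : ℕ => ‖qTerm a q z (k + 1)‖ :=
    (summable_nat_add_iff (f := fun k : ℕ => ‖qTerm a q z k‖) 1).2 (summable_norm_term hq a hz)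
  have hbound : ∀ n : ℕ, ‖(∑' k : ℕ, qTerm a q (q ^ n * z) k) - 1‖
      ≤ ‖q‖ ^ n * ∑' k : ℕ, ‖qTerm a q z (k + 1)‖ := by
    intro n
    have hsn : Summable (qTerm a q (q ^ n * z)) := summable_term hq a (hzn n)
    have h0 := hsn.tsum_eq_zero_add
    have hc0 : qTerm a q (q ^ n * z) 0 = 1 := by simp [qTerm, qPoch]
    have hS1 : (∑' k : ℕ, qTerm a q (q ^ n * z) k) - 1
        = ∑' k : ℕ, qTerm a q (q ^ n * z) (k + 1) := by
      rw [h0, hc0]; ring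
    rw [hS1]
    have hsn' : Summable fun k : ℕ => ‖qTerm a q (q ^ n * z) (k + 1)‖ :=
      (summable_nat_add_iff (f := fun k : ℕ => ‖qTerm a q (q ^ n * z) k‖) 1).2
        (summable_norm_term hq a (hzn n))
    refine le_trans (norm_tsum_le_tsum_norm hsn') ?_
    have hterm : ∀ k : ℕ, ‖qTerm a q (q ^ n * z) (k + 1)‖
        ≤ ‖q‖ ^ n * ‖qTerm a q z (k + 1)‖ := by
      intro k
      simp only [qTerm, norm_mul, norm_div, norm_pow, mul_pow]
      have h1 : (‖q‖ ^ n) ^ (k + 1) ≤ (‖q‖ ^ n) ^ 1 :=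
        pow_le_pow_of_le_one (pow_nonneg (norm_nonneg q) n)
          (pow_le_one₀ (norm_nonneg q) hq.le) (Nat.one_le_iff_ne_zero.2 (Nat.succ_ne_zero k))
      rw [pow_one] at h1
      have h2 : (0:ℝ) ≤ ‖qPoch a q (k+1)‖ / ‖qPoch q q (k+1)‖ :=
        div_nonneg (norm_nonneg _) (norm_nonneg _)
      have h3 := pow_nonneg (norm_nonneg z) (k + 1)
      have h4 := pow_nonneg (pow_nonneg (norm_nonneg q) n) (k + 1)
      calc ‖qPoch a q (k+1)‖ / ‖qPoch q q (k+1)‖ * ((‖q‖ ^ n) ^ (k+1) * ‖z‖ ^ (k+1))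
          ≤ ‖qPoch a q (k+1)‖ / ‖qPoch q q (k+1)‖ * (‖q‖ ^ n * ‖z‖ ^ (k+1)) := by
            have : (‖q‖ ^ n) ^ (k+1) * ‖z‖ ^ (k+1) ≤ ‖q‖ ^ n * ‖z‖ ^ (k+1) := by nlinarith
            nlinarith
      _ = ‖q‖ ^ n * (‖qPoch a q (k+1)‖ / ‖qPoch q q (k+1)‖ * ‖z‖ ^ (k+1)) := by ring
    refine le_trans (Summable.tsum_le_tsum hterm hsn' (hM.mul_left _)) ?_
    rw [tsum_mul_left]
  have L2b : Tendsto (fun n : ℕ => ∑' k : ℕ, qTerm a q (q ^ n * z) k) atTop (𝓝 1) := by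
    rw [tendsto_iff_norm_sub_tendsto_zero]
    apply squeeze_zero (fun n => norm_nonneg _) hbound
    simpa using (tendsto_pow_atTop_nhds_zero_of_lt_one (norm_nonneg q) hq).mul_const
      (∑' k : ℕ, ‖qTerm a q z (k + 1)‖)
  have L2 : Tendsto (fun n => qPoch (a * z) q n * ∑' k : ℕ, qTerm a q (q ^ n * z) k) atTop
      (𝓝 (qPochInf (a * z) q)) := by
    simpa using L2a.mul L2b
  exact tendsto_nhds_unique L1 (L2.congr fun n => (hind n).symm)

theorem qbinom {q : ℂ} (hq : ‖q‖ < 1) {a z : ℂ} (hz : ‖z‖ < 1)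
    (haz : ∀ j : ℕ, 1 - a * z * q ^ j ≠ 0) :
    ∑' k : ℕ, qTerm a q z k = qPochInf (a * z) q / qPochInf z q := by
  have h := qbinom_aux hq hz haz
  have hne := qPochInf_ne_zero hq (hfac_of_small hq hz)
  rw [eq_div_iff hne]
  linear_combination h

/-- Heine's first ₂φ₁ transformation formula. -/
theorem heine_first_transformation (q a b c z : ℂ) (hq : ‖q‖ < 1)
    (hz : ‖z‖ < 1) (hb1 : ‖b‖ < 1) (hb0 : b ≠ 0)
    (hc : ∀ j : ℕ, c ≠ q ^ (-(j : ℤ)))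
    (haz : ∀ j : ℕ, a * z ≠ q ^ (-(j : ℤ))) :
    ∑' k : ℕ, qPoch a q k * qPoch b q k / (qPoch q q k * qPoch c q k) * z ^ k
    = qPochInf b q * qPochInf (a * z) q / (qPochInf c q * qPochInf z q) *
        ∑' k : ℕ, qPoch (c / b) q k * qPoch z q k /
          (qPoch q q k * qPoch (a * z) q k) * b ^ k := by
  have hq' : ‖q‖ < 1 := hq
  have hz' : ‖z‖ < 1 := hz
  have hb1' : ‖b‖ < 1 := hb1
  have hbfac : ∀ j : ℕ, 1 - b * q ^ j ≠ 0 := hfac_of_small hq' hb1'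
  have hzfac : ∀ j : ℕ, 1 - z * q ^ j ≠ 0 := hfac_of_small hq' hz'
  have hcfac : ∀ j : ℕ, 1 - c * q ^ j ≠ 0 := hfac_of_zpow hc
  have hazfac : ∀ j : ℕ, 1 - a * z * q ^ j ≠ 0 := hfac_of_zpow haz
  have hqn1 : ∀ n : ℕ, ‖q‖ ^ n ≤ 1 := fun n => pow_le_one₀ (norm_nonneg q) hq'.le
  have hbq : ∀ k : ℕ, ‖b * q ^ k‖ < 1 := by
    intro k
    rw [norm_mul, norm_pow]
    have := norm_nonneg b
    nlinarith [hqn1 k, pow_nonneg (norm_nonneg q) k]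
  have hzq : ∀ n : ℕ, ‖z * q ^ n‖ < 1 := by
    intro n
    rw [norm_mul, norm_pow]
    have := norm_nonneg z
    nlinarith [hqn1 n, pow_nonneg (norm_nonneg q) n]
  -- the double-indexed family
  set f : ℕ → ℕ → ℂ := fun k n => qTerm a q z k * qTerm (c / b) q b n * q ^ (k * n) with hfdef
  -- step 1-3 : per-k identity
  have hstep_k : ∀ k : ℕ,
      qPoch a q k * qPoch b q k / (qPoch q q k * qPoch c q k) * z ^ k
        = qPochInf b q / qPochInf c q * ∑' n : ℕ, f k n := by
    intro k
    have hPq := qPoch_q_ne_zero hq' k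
    have hPc := qPoch_ne_zero hcfac k
    have hIb := qPochInf_ne_zero hq' (hw_tail hbfac k)
    have hIc := qPochInf_ne_zero hq' (hw_tail hcfac k)
    have hcb : (c / b) * (b * q ^ k) = c * q ^ k := by field_simp
    have hfaccb : ∀ j : ℕ, 1 - (c / b) * (b * q ^ k) * q ^ j ≠ 0 := by
      intro j; rw [hcb]; exact hw_tail hcfac k j
    have e2 := qbinom hq' (hbq k) hfaccb
    rw [hcb] at e2
    have e3 : qTerm a q z k * ∑' n : ℕ, qTerm (c / b) q (b * q ^ k) n
        = ∑' n : ℕ, f k n := by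
      rw [← tsum_mul_left]
      refine tsum_congr fun n => ?_
      simp only [hfdef, qTerm, mul_pow, ← pow_mul]
      ring
    have hsb := qPochInf_split hq' hbfac k
    have hsc := qPochInf_split hq' hcfac k
    rw [← e3, e2, hsb, hsc]
    have hIc' : qPochInf (q ^ k * c) q ≠ 0 := by rwa [mul_comm]
    simp only [qTerm]
    field_simp
  -- step 4 : per-n identity
  have hstep_n : ∀ n : ℕ, ∑' k : ℕ, f k n
      = qPochInf (a * z) q / qPochInf z q *
          (qPoch (c / b) q n * qPoch z q n / (qPoch q q n * qPoch (a * z) q n) * b ^ n) := by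
    intro n
    have hfac_azn : ∀ j : ℕ, 1 - a * (z * q ^ n) * q ^ j ≠ 0 := by
      intro j
      rw [show a * (z * q ^ n) = a * z * q ^ n by ring]
      exact hw_tail hazfac n j
    have hb1n := qbinom hq' (hzq n) hfac_azn
    rw [show a * (z * q ^ n) = a * z * q ^ n by ring] at hb1n
    have e4 : ∑' k : ℕ, f k n
        = (∑' k : ℕ, qTerm a q (z * q ^ n) k) * qTerm (c / b) q b n := by
      rw [← tsum_mul_right]
      refine tsum_congr fun k => ?_
      simp only [hfdef, qTerm, mul_pow, ← pow_mul]
      rw [mul_comm k n]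
      ring
    have hsz := qPochInf_split hq' hzfac n
    have hsaz := qPochInf_split hq' hazfac n
    have hIzq := qPochInf_ne_zero hq' (hw_tail hzfac n)
    have hIazq := qPochInf_ne_zero hq' (hw_tail hazfac n)
    have hPz := qPoch_ne_zero hzfac n
    have hPaz := qPoch_ne_zero hazfac n
    have hPq := qPoch_q_ne_zero hq' n
    rw [e4, hb1n, hsz, hsaz]
    simp only [qTerm]
    field_simp
  -- Fubini
  have hF : Summable (Function.uncurry f) := by
    have hsum2 : Summable fun p : ℕ × ℕ => ‖qTerm a q z p.1‖ * ‖qTerm (c / b) q b p.2‖ :=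
      Summable.mul_of_nonneg (summable_norm_term hq' a hz') (summable_norm_term hq' (c / b) hb1')
        (fun _ => norm_nonneg _) (fun _ => norm_nonneg _)
    refine Summable.of_norm_bounded hsum2 ?_
    rintro ⟨k, n⟩
    simp only [Function.uncurry, hfdef, norm_mul, norm_pow]
    have h1 : ‖q‖ ^ (k * n) ≤ 1 := hqn1 _
    have h2 := norm_nonneg (qTerm a q z k)
    have h3 := norm_nonneg (qTerm (c / b) q b n)
    simpa using mul_le_mul_of_nonneg_left h1 (mul_nonneg h2 h3)
  have hIc0 := qPochInf_ne_zero hq' hcfac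
  have hIz0 := qPochInf_ne_zero hq' hzfac
  calc ∑' k : ℕ, qPoch a q k * qPoch b q k / (qPoch q q k * qPoch c q k) * z ^ k
      = ∑' k : ℕ, qPochInf b q / qPochInf c q * ∑' n : ℕ, f k n := tsum_congr hstep_k
    _ = qPochInf b q / qPochInf c q * ∑' k : ℕ, ∑' n : ℕ, f k n := tsum_mul_left
    _ = qPochInf b q / qPochInf c q * ∑' n : ℕ, ∑' k : ℕ, f k n := by
        rw [← hF.tsum_comm]
    _ = qPochInf b q / qPochInf c q * ∑' n : ℕ, qPochInf (a * z) q / qPochInf z q *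
          (qPoch (c / b) q n * qPoch z q n / (qPoch q q n * qPoch (a * z) q n) * b ^ n) := by
        rw [tsum_congr hstep_n]
    _ = qPochInf b q / qPochInf c q * (qPochInf (a * z) q / qPochInf z q *
          ∑' n : ℕ, qPoch (c / b) q n * qPoch z q n /
            (qPoch q q n * qPoch (a * z) q n) * b ^ n) := by
        rw [tsum_mul_left]
    _ = qPochInf b q * qPochInf (a * z) q / (qPochInf c q * qPochInf z q) *
          ∑' k : ℕ, qPoch (c / b) q k * qPoch z q k /
            (qPoch q q k * qPoch (a * z) q k) * b ^ k := by
        ring
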